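/- arXiv:1603.01180 — 3 statements merged into one kernel-verified Lean document; each statement's English description precedes it below -/
import Mathlib

section
/- In a field, given nonzero elements c₁, c₂, x₁, x₂, x₃ with c₁ + 1 ≠ 0, c₂ + 1 ≠ 0, c₁⁻¹ + 1 ≠ 0, define x₃ = (c₁ + x₂²)/((c₁+1)x₁), x₄ = (c₂x₃² + 1)/((c₂+1)x₂), x₅ = (c₃ + x₄²)/((c₃+1)x₃) with c₃ = 1/c₁. Then c₁x₃ + (1/c₁)x₅ + c₂·W = 0, where W = -c₂·[ (c₁ + x₂² - x₁x₃)/(c₂²x₁) + (c₁⁻¹ - x₃x₅)/(c₂²x₃) + (1/x₃)·((c₂x₃² + 1)/(c₂(c₂+1)x₂))² ]. -/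
/-! An exchange relation `(c + 1) x x' = c + y²` gives `(c + y² - x x') / x = c x'`.
The first summand of `W` is this quantity for the exchange `x₁ ↦ x₃`, divided by `c₂²`, and the
third summand is `x₄² / (c₂² x₃)`, which completes the second summand to the same quantity for
`x₃ ↦ x₅`. Hence `c₂ W = -(c₁ x₃ + c₁⁻¹ x₅)`. -/

theorem exchange_sub_div_eq {F : Type*} [Field F] {c x x' y : F} (hc : c + 1 ≠ 0) (hx : x ≠ 0)
    (h : x' = (c + y ^ 2) / ((c + 1) * x)) :
    (c + y ^ 2 - x * x') / x = c * x' := by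
  rw [eq_div_iff (mul_ne_zero hc hx)] at h
  rw [div_eq_iff hx]
  linear_combination -h

theorem stmt_10_general {F : Type*} [Field F] (c₁ c₂ c₃ x₁ x₂ x₃ x₄ x₅ W : F)
    (hc₂ : c₂ ≠ 0) (hx₁ : x₁ ≠ 0) (hx₃0 : x₃ ≠ 0)
    (hc₁1 : c₁ + 1 ≠ 0) (hc₃1 : c₁⁻¹ + 1 ≠ 0)
    (hc₃ : c₃ = 1 / c₁)
    (hx₃ : x₃ = (c₁ + x₂ ^ 2) / ((c₁ + 1) * x₁))
    (hx₄ : x₄ = (c₂ * x₃ ^ 2 + 1) / ((c₂ + 1) * x₂))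
    (hx₅ : x₅ = (c₃ + x₄ ^ 2) / ((c₃ + 1) * x₃))
    (hW : W = -c₂ * ((c₁ + x₂ ^ 2 - x₁ * x₃) / (c₂ ^ 2 * x₁) +
        (c₁⁻¹ - x₃ * x₅) / (c₂ ^ 2 * x₃) +
        (1 / x₃) * ((c₂ * x₃ ^ 2 + 1) / (c₂ * (c₂ + 1) * x₂)) ^ 2)) :
    c₁ * x₃ + (1 / c₁) * x₅ + c₂ * W = 0 := by
  rw [one_div] at hc₃
  subst hc₃
  have e₁ := exchange_sub_div_eq hc₁1 hx₁ hx₃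
  have e₂ := exchange_sub_div_eq hc₃1 hx₃0 hx₅
  have hx₄' : (c₂ * x₃ ^ 2 + 1) / (c₂ * (c₂ + 1) * x₂) = x₄ / c₂ := by
    rw [hx₄, div_div]
    ring
  have hW' : c₂ * W = -((c₁ + x₂ ^ 2 - x₁ * x₃) / x₁ + (c₁⁻¹ + x₄ ^ 2 - x₃ * x₅) / x₃) := by
    rw [hW, hx₄']
    field_simp
    ring
  rw [hW', e₁, e₂, one_div]
  ring

theorem stmt_10 {F : Type*} [Field F] (c₁ c₂ c₃ x₁ x₂ x₃ x₄ x₅ W : F)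
    (hc₁ : c₁ ≠ 0) (hc₂ : c₂ ≠ 0) (hx₁ : x₁ ≠ 0) (hx₂ : x₂ ≠ 0) (hx₃0 : x₃ ≠ 0)
    (hc₁1 : c₁ + 1 ≠ 0) (hc₂1 : c₂ + 1 ≠ 0) (hc₃1 : c₁⁻¹ + 1 ≠ 0)
    (hc₃ : c₃ = 1 / c₁)
    (hx₃ : x₃ = (c₁ + x₂ ^ 2) / ((c₁ + 1) * x₁))
    (hx₄ : x₄ = (c₂ * x₃ ^ 2 + 1) / ((c₂ + 1) * x₂))
    (hx₅ : x₅ = (c₃ + x₄ ^ 2) / ((c₃ + 1) * x₃))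
    (hW : W = -c₂ * ((c₁ + x₂ ^ 2 - x₁ * x₃) / (c₂ ^ 2 * x₁) +
        (c₁⁻¹ - x₃ * x₅) / (c₂ ^ 2 * x₃) +
        (1 / x₃) * ((c₂ * x₃ ^ 2 + 1) / (c₂ * (c₂ + 1) * x₂)) ^ 2)) :
    c₁ * x₃ + (1 / c₁) * x₅ + c₂ * W = 0 :=
  stmt_10_general c₁ c₂ c₃ x₁ x₂ x₃ x₄ x₅ W hc₂ hx₁ hx₃0 hc₁1 hc₃1 hc₃ hx₃ hx₄ hx₅ hW
end

section
/- The number of pairs of strictly increasing sequences 1 ≤ i₁ < ⋯ < i_p ≤ n and 1 ≤ j₁ < ⋯ < j_p ≤ n with j_q ≤ i_q for all q (including p = 0) equals the Catalan number C_{n+1} = (1/(n+2))·binom(2n+2, n+1). -/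
/-!
Strictly increasing sequences are determined by their value sets `A = {i_q}` and `B = {j_q}`,
and `j_q ≤ i_q` for all `q` says exactly that below every threshold `B` has at least as many
elements as `A`. Encode the pair as the word `U b₀ a₀ b₁ a₁ ⋯ b_{n-1} a_{n-1} D`, with `b_k = U`
iff `k ∈ B` and `a_k = D` iff `k ∈ A`. After `U b₀ a₀ ⋯ b_{t-1} a_{t-1}` the height is
`1 + 2 (#{b ∈ B | b < t} - #{a ∈ A | a < t})`, so the threshold condition together with
`#A = #B` is exactly the Dyck condition. Every Dyck word of semilength `n + 1` starts with `U`
and ends with `D`, hence arises in this way, and the pairs are counted by `C_{n+1}`.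
-/

open Finset DyckStep

namespace Finset

variable {α : Type*} [LinearOrder α] {p : ℕ}

theorem card_filter_lt_orderEmbOfFin (s : Finset α) (hs : #s = p) (q : Fin p) :
    #{y ∈ s | y < s.orderEmbOfFin hs q} = q := by
  have : {y ∈ s | y < s.orderEmbOfFin hs q} = (Iio q).map (s.orderEmbOfFin hs).toEmbedding := by
    ext y
    simp only [mem_filter, mem_map, mem_Iio, RelEmbedding.coe_toEmbedding]
    constructor
    · rintro ⟨hy, hlt⟩
      obtain ⟨i, rfl⟩ : y ∈ Set.range (s.orderEmbOfFin hs) := by simpa using hy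
      exact ⟨i, (s.orderEmbOfFin hs).lt_iff_lt.mp hlt, rfl⟩
    · rintro ⟨i, hi, rfl⟩
      exact ⟨s.orderEmbOfFin_mem hs i, (s.orderEmbOfFin hs).lt_iff_lt.mpr hi⟩
  rw [this, card_map, Fin.card_Iio]

theorem lt_card_filter_lt_iff_orderEmbOfFin_lt (s : Finset α) (hs : #s = p) (q : Fin p) (x : α) :
    (q : ℕ) < #{y ∈ s | y < x} ↔ s.orderEmbOfFin hs q < x := by
  rw [← card_filter_lt_orderEmbOfFin s hs q]
  constructor
  · intro h
    by_contra! hx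
    exact h.not_ge (card_le_card (monotone_filter_right s fun y _ hy => hy.trans_le hx))
  · intro hx
    refine card_lt_card ((ssubset_iff_of_subset ?_).mpr ⟨s.orderEmbOfFin hs q, ?_, ?_⟩)
    · exact monotone_filter_right s fun y _ hy => hy.trans hx
    · simp [hx]
    · simp

theorem forall_orderEmbOfFin_le_iff {s t : Finset α} (hs : #s = p) (ht : #t = p) :
    (∀ q, t.orderEmbOfFin ht q ≤ s.orderEmbOfFin hs q) ↔
      ∀ x, #{y ∈ s | y < x} ≤ #{y ∈ t | y < x} := by
  constructor
  · intro hle x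
    by_contra! hlt
    have hq : #{y ∈ t | y < x} < p := hlt.trans_le (hs ▸ card_filter_le _ _)
    have hs_lt := (lt_card_filter_lt_iff_orderEmbOfFin_lt s hs ⟨_, hq⟩ x).mp hlt
    exact ((lt_card_filter_lt_iff_orderEmbOfFin_lt t ht ⟨_, hq⟩ x).mpr
      ((hle _).trans_lt hs_lt)).false
  · intro hdom q
    by_contra! hlt
    have hq := (lt_card_filter_lt_iff_orderEmbOfFin_lt s hs q _).mpr hlt
    exact ((lt_card_filter_lt_iff_orderEmbOfFin_lt t ht q _).mp (hq.trans_le (hdom _))).false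

theorem card_filter_lt_add_one (S : Finset ℕ) (t : ℕ) :
    #{k ∈ S | k < t + 1} = #{k ∈ S | k < t} + if t ∈ S then 1 else 0 := by
  split_ifs with ht
  · rw [← card_insert_of_notMem (a := t) (s := {k ∈ S | k < t}) (by simp)]
    congr 1
    ext k
    simp only [mem_filter, mem_insert]
    grind
  · congr 1
    refine filter_congr fun k hk => ?_
    have : k ≠ t := by rintro rfl; exact ht hk
    omega

end Finset

theorem StrictMono.eq_orderEmbOfFin {α : Type*} [LinearOrder α] {p : ℕ} {f : Fin p → α}
    (hf : StrictMono f) :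
    f = (univ.image f).orderEmbOfFin (by rw [card_image_of_injective _ hf.injective, card_fin]) :=
  orderEmbOfFin_unique _ (fun q => mem_image_of_mem f (mem_univ q)) hf

abbrev DominatedPair (α : Type*) [LinearOrder α] :=
  {AB : Finset α × Finset α // #AB.1 = #AB.2 ∧ ∀ x, #{y ∈ AB.1 | y < x} ≤ #{y ∈ AB.2 | y < x}}

noncomputable def strictMonoPairEquiv (α : Type*) [LinearOrder α] (p : ℕ) :
    {fg : (Fin p → α) × (Fin p → α) // StrictMono fg.1 ∧ StrictMono fg.2 ∧ ∀ q, fg.2 q ≤ fg.1 q} ≃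
      {AB : DominatedPair α // #AB.1.1 = p} where
  toFun fg :=
    have hf := fg.2.1.eq_orderEmbOfFin
    have hg := fg.2.2.1.eq_orderEmbOfFin
    ⟨⟨(univ.image fg.1.1, univ.image fg.1.2), by
        rw [card_image_of_injective _ fg.2.1.injective,
          card_image_of_injective _ fg.2.2.1.injective],
      (forall_orderEmbOfFin_le_iff _ _).mp fun q => by
        rw [← congrFun hf q, ← congrFun hg q]
        exact fg.2.2.2 q⟩,
      by simp [card_image_of_injective _ fg.2.1.injective]⟩
  invFun AB := ⟨(AB.1.1.1.orderEmbOfFin AB.2, AB.1.1.2.orderEmbOfFin (AB.1.2.1 ▸ AB.2)),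
    (orderEmbOfFin _ _).strictMono, (orderEmbOfFin _ _).strictMono,
    (forall_orderEmbOfFin_le_iff _ _).mpr AB.1.2.2⟩
  left_inv fg :=
    Subtype.ext <| Prod.ext fg.2.1.eq_orderEmbOfFin.symm fg.2.2.1.eq_orderEmbOfFin.symm
  right_inv AB := by ext <;> simp

noncomputable def sigmaStrictMonoPairEquiv (n : ℕ) :
    ((p : Fin (n + 1)) × {fg : (Fin p → Fin n) × (Fin p → Fin n) //
        StrictMono fg.1 ∧ StrictMono fg.2 ∧ ∀ q, fg.2 q ≤ fg.1 q}) ≃ DominatedPair (Fin n) :=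
  (Equiv.sigmaCongrRight fun p : Fin (n + 1) => (strictMonoPairEquiv (Fin n) p).trans
      (Equiv.subtypeEquivRight fun AB => by rw [Fin.ext_iff])).trans
    (Equiv.sigmaFiberEquiv fun AB : DominatedPair (Fin n) =>
      (⟨#AB.1.1, Nat.lt_succ_of_le (card_le_univ AB.1.1 |>.trans_eq (Fintype.card_fin n))⟩ :
        Fin (n + 1)))

namespace List

theorem count_U_add_count_D (l : List DyckStep) : l.count U + l.count D = l.length := by
  induction l with
  | nil => rfl
  | cons s l ih => cases s <;> grind

/-- An odd prefix has odd length, so if it has no more `D`s than `U`s it has strictly fewer,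
and one more letter cannot break the inequality. -/
theorem count_D_le_count_U_take_of_odd {l : List DyckStep}
    (hodd : ∀ t, 2 * t + 1 < l.length →
      (l.take (2 * t + 1)).count D ≤ (l.take (2 * t + 1)).count U)
    (hl : l.count D ≤ l.count U) (i : ℕ) : (l.take i).count D ≤ (l.take i).count U := by
  rcases le_or_gt l.length i with hi | hi
  · rwa [take_of_length_le hi]
  obtain ⟨t, rfl | rfl⟩ := Nat.even_or_odd' i
  · rcases t with _ | t
    · simp
    have hlen := (l.take (2 * t + 1)).count_U_add_count_D
    rw [length_take_of_le (by omega)] at hlen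
    have := hodd t (by omega)
    rw [show 2 * (t + 1) = 2 * t + 1 + 1 by ring, take_add_one, getElem?_eq_getElem (by omega)]
    cases l[2 * t + 1] <;> grind
  · exact hodd t hi

end List

section Letters

variable (S T : Finset ℕ)

def blockLetter (i : ℕ) : DyckStep :=
  if i % 2 = 0 then (if i / 2 ∈ T then U else D) else if i / 2 ∈ S then D else U

theorem blockLetter_two_mul (k : ℕ) :
    blockLetter S T (2 * k) = if k ∈ T then U else D := by
  simp [blockLetter]

theorem blockLetter_two_mul_add_one (k : ℕ) :
    blockLetter S T (2 * k + 1) = if k ∈ S then D else U := by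
  simp [blockLetter, Nat.add_mod, show (2 * k + 1) / 2 = k by omega]

theorem count_map_range_blockLetter (t : ℕ) :
    ((List.range (2 * t)).map (blockLetter S T)).count U + #{k ∈ S | k < t} =
        t + #{k ∈ T | k < t} ∧
      ((List.range (2 * t)).map (blockLetter S T)).count D + #{k ∈ T | k < t} =
        t + #{k ∈ S | k < t} := by
  induction t with
  | zero => simp
  | succ t ih =>
    rw [show 2 * (t + 1) = 2 * t + 1 + 1 by ring, List.range_succ, List.range_succ]
    simp only [List.map_append, List.count_append, List.map_cons, List.map_nil,
      blockLetter_two_mul, blockLetter_two_mul_add_one, card_filter_lt_add_one]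
    split_ifs <;> grind

end Letters

section DyckEncoding

variable {n : ℕ} (A B : Finset (Fin n))

def dyckBody : List DyckStep :=
  (List.range (2 * n)).map (blockLetter (A.map Fin.valEmbedding) (B.map Fin.valEmbedding))

def dyckList : List DyckStep := U :: dyckBody A B ++ [D]

theorem length_dyckBody : (dyckBody A B).length = 2 * n := by simp [dyckBody]

theorem length_dyckList : (dyckList A B).length = 2 * n + 2 := by simp [dyckList, length_dyckBody]

variable (n) in
def pairOfBody (m : List DyckStep) : Finset (Fin n) × Finset (Fin n) :=
  (univ.filter fun x : Fin n => m[2 * x.val + 1]? = some D,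
    univ.filter fun x : Fin n => m[2 * x.val]? = some U)

theorem getElem?_dyckBody_two_mul (x : Fin n) :
    (dyckBody A B)[2 * x.val]? = some (if x ∈ B then U else D) := by
  rw [dyckBody, List.getElem?_map, List.getElem?_range (by omega), Option.map_some,
    blockLetter_two_mul]
  simp [Fin.val_inj]

theorem getElem?_dyckBody_two_mul_add_one (x : Fin n) :
    (dyckBody A B)[2 * x.val + 1]? = some (if x ∈ A then D else U) := by
  rw [dyckBody, List.getElem?_map, List.getElem?_range (by omega), Option.map_some,
    blockLetter_two_mul_add_one]
  simp [Fin.val_inj]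

theorem pairOfBody_dyckBody : pairOfBody n (dyckBody A B) = (A, B) := by
  ext x <;> simp only [pairOfBody, mem_filter, mem_univ, true_and, getElem?_dyckBody_two_mul,
    getElem?_dyckBody_two_mul_add_one] <;> split_ifs <;> simp [*]

theorem dyckBody_pairOfBody {m : List DyckStep} (hm : m.length = 2 * n) :
    dyckBody (pairOfBody n m).1 (pairOfBody n m).2 = m := by
  refine List.ext_getElem? fun i => ?_
  rcases lt_or_ge i (2 * n) with hi | hi
  · obtain ⟨k, rfl | rfl⟩ := Nat.even_or_odd' i
    · have hx : m[2 * k]? = some m[2 * k] := List.getElem?_eq_getElem (by omega)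
      rw [getElem?_dyckBody_two_mul _ _ ⟨k, by omega⟩]
      cases h : m[2 * k] <;> simp [pairOfBody, hx, h]
    · have hx : m[2 * k + 1]? = some m[2 * k + 1] := List.getElem?_eq_getElem (by omega)
      rw [getElem?_dyckBody_two_mul_add_one _ _ ⟨k, by omega⟩]
      cases h : m[2 * k + 1] <;> simp [pairOfBody, hx, h]
  · rw [List.getElem?_eq_none (by rwa [length_dyckBody]), List.getElem?_eq_none (by omega)]

theorem dyckList_pairOfBody (w : DyckWord) (hw : w.semilength = n + 1) :
    dyckList (pairOfBody n w.toList.dropLast.tail).1 (pairOfBody n w.toList.dropLast.tail).2 =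
      w.toList := by
  have hlen := w.two_mul_semilength_eq_length
  rw [dyckList, dyckBody_pairOfBody (by rw [List.length_tail, List.length_dropLast]; omega)]
  exact w.cons_tail_dropLast_concat (by rintro rfl; simp at hw)

theorem card_filter_lt_eq_card_filter_map_val_lt (x : Fin n) :
    #{y ∈ A | y < x} = #{k ∈ A.map Fin.valEmbedding | k < x.val} := by
  rw [filter_map, card_map]
  rfl

theorem card_filter_map_val_lt_self : #{k ∈ A.map Fin.valEmbedding | k < n} = #A := by
  rw [filter_true_of_mem (by simp), card_map]

theorem take_two_mul_add_one_dyckList {t : ℕ} (ht : t ≤ n) :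
    (dyckList A B).take (2 * t + 1) =
      U :: (List.range (2 * t)).map
        (blockLetter (A.map Fin.valEmbedding) (B.map Fin.valEmbedding)) := by
  rw [dyckList, List.take_append_of_le_length (by rw [List.length_cons, length_dyckBody]; omega),
    List.take_succ_cons, dyckBody, ← List.map_take, List.take_range, min_eq_left (by omega)]

theorem count_D_le_count_U_take_dyckList_iff {t : ℕ} (ht : t ≤ n) :
    ((dyckList A B).take (2 * t + 1)).count D ≤ ((dyckList A B).take (2 * t + 1)).count U ↔
      #{k ∈ A.map Fin.valEmbedding | k < t} ≤ #{k ∈ B.map Fin.valEmbedding | k < t} := by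
  obtain ⟨hU, hD⟩ :=
    count_map_range_blockLetter (A.map Fin.valEmbedding) (B.map Fin.valEmbedding) t
  rw [take_two_mul_add_one_dyckList A B ht, List.count_cons_self, List.count_cons_of_ne (by simp)]
  omega

theorem count_U_dyckList : (dyckList A B).count U + #A = n + 1 + #B := by
  obtain ⟨hU, -⟩ :=
    count_map_range_blockLetter (A.map Fin.valEmbedding) (B.map Fin.valEmbedding) n
  rw [card_filter_map_val_lt_self, card_filter_map_val_lt_self] at hU
  simp only [dyckList, dyckBody, List.cons_append, List.count_cons, List.count_append]
  grind

theorem count_D_dyckList : (dyckList A B).count D + #B = n + 1 + #A := by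
  obtain ⟨-, hD⟩ :=
    count_map_range_blockLetter (A.map Fin.valEmbedding) (B.map Fin.valEmbedding) n
  rw [card_filter_map_val_lt_self, card_filter_map_val_lt_self] at hD
  simp only [dyckList, dyckBody, List.cons_append, List.count_cons, List.count_append]
  grind

theorem isDyck_dyckList_iff :
    ((dyckList A B).count U = (dyckList A B).count D ∧
      ∀ i, ((dyckList A B).take i).count D ≤ ((dyckList A B).take i).count U) ↔
      #A = #B ∧ ∀ x, #{y ∈ A | y < x} ≤ #{y ∈ B | y < x} := by
  have hU := count_U_dyckList A B
  have hD := count_D_dyckList A B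
  constructor
  · rintro ⟨hbal, hprefix⟩
    refine ⟨by omega, fun x => ?_⟩
    rw [card_filter_lt_eq_card_filter_map_val_lt, card_filter_lt_eq_card_filter_map_val_lt]
    exact (count_D_le_count_U_take_dyckList_iff A B x.2.le).mp (hprefix _)
  · rintro ⟨hcard, hdom⟩
    have hbal : (dyckList A B).count U = (dyckList A B).count D := by omega
    refine ⟨hbal, List.count_D_le_count_U_take_of_odd (fun t ht => ?_) hbal.ge⟩
    have ht : t ≤ n := by rw [length_dyckList] at ht; omega
    rw [count_D_le_count_U_take_dyckList_iff A B ht]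
    rcases ht.lt_or_eq with ht | rfl
    · simpa [card_filter_lt_eq_card_filter_map_val_lt] using hdom ⟨t, ht⟩
    · rw [card_filter_map_val_lt_self, card_filter_map_val_lt_self, hcard]

end DyckEncoding

def DominatedPair.toDyckWord {n : ℕ} (AB : DominatedPair (Fin n)) : DyckWord :=
  ⟨dyckList AB.1.1 AB.1.2, ((isDyck_dyckList_iff _ _).mpr AB.2).1,
    ((isDyck_dyckList_iff _ _).mpr AB.2).2⟩

def dominatedPairEquivDyckWord (n : ℕ) :
    DominatedPair (Fin n) ≃ {w : DyckWord // w.semilength = n + 1} where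
  toFun AB := ⟨AB.toDyckWord, by
    have := count_U_dyckList AB.1.1 AB.1.2
    have := AB.2.1
    simp only [DyckWord.semilength, DominatedPair.toDyckWord]
    omega⟩
  invFun w := ⟨pairOfBody n w.1.toList.dropLast.tail, by
    rw [← isDyck_dyckList_iff, dyckList_pairOfBody w.1 w.2]
    exact ⟨w.1.count_U_eq_count_D, w.1.count_D_le_count_U⟩⟩
  left_inv AB := Subtype.ext <| by
    simp only [DominatedPair.toDyckWord, dyckList, List.dropLast_concat, List.tail_cons]
    exact pairOfBody_dyckBody _ _
  right_inv w := Subtype.ext <| DyckWord.ext <| dyckList_pairOfBody w.1 w.2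

theorem stmt_16 (n : ℕ) :
    Fintype.card ((p : Fin (n + 1)) ×
      {fg : (Fin (p : ℕ) → Fin n) × (Fin (p : ℕ) → Fin n) //
        StrictMono fg.1 ∧ StrictMono fg.2 ∧ ∀ q, fg.2 q ≤ fg.1 q}) =
    Nat.choose (2 * n + 2) (n + 1) / (n + 2) ∧
    Nat.choose (2 * n + 2) (n + 1) / (n + 2) = catalan (n + 1) := by
  have hcatalan : Nat.choose (2 * n + 2) (n + 1) / (n + 2) = catalan (n + 1) := by
    rw [catalan_eq_centralBinom_div, Nat.centralBinom, mul_add_one]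
  refine ⟨?_, hcatalan⟩
  rw [hcatalan,
    Fintype.card_congr ((sigmaStrictMonoPairEquiv n).trans (dominatedPairEquivDyckWord n)),
    DyckWord.card_dyckWord_semilength_eq_catalan]
end

section
/- Let A be a unital ℂ-algebra with elements e₁, e₂ satisfying e₁² = e₁, e₂² = e₂, e₁e₂e₁ = -2e₁, e₂e₁e₂ = -2e₂. Define u₁ = e₁ + 1, u₂ = e₂ + 1. Then for all integers k, m, the product u₁^k·u₂^m lies in the ℂ-linear span of {1, e₁, e₂, e₁e₂, e₂e₁}. -/
/-! Since `e₁` is idempotent, `span ℂ {1, e₁}` is closed under multiplication, hence a subalgebra;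
it contains `u₁` and `u₁⁻¹`, so it contains every `u₁ ^ k`. Likewise `u₂ ^ m ∈ span ℂ {1, e₂}`, and the
product of these two spans is spanned by `1, e₁, e₂, e₁ e₂`. -/

open Submodule

section

variable {R A : Type*} [CommSemiring R] [Semiring A] [Algebra R A]

theorem IsIdempotentElem.span_one_mul_span_one_le {e : A} (he : IsIdempotentElem e) :
    span R {1, e} * span R {1, e} ≤ span R ({1, e} : Set A) := by
  rw [span_mul_span, span_le]
  rintro _ ⟨a, ha, b, hb, rfl⟩
  apply subset_span
  rcases ha with rfl | rfl <;> rcases hb with rfl | rfl <;> simp [he.eq]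

theorem IsIdempotentElem.val_zpow_mem_span_one {e : A} (he : IsIdempotentElem e) {u : Aˣ}
    (hu : (u : A) ∈ span R {1, e}) (hu' : ((u⁻¹ : Aˣ) : A) ∈ span R {1, e}) (k : ℤ) :
    ((u ^ k : Aˣ) : A) ∈ span R {1, e} := by
  let S : Subalgebra R A := (span R {1, e}).toSubalgebra (subset_span (by simp))
    fun _ _ hx hy => he.span_one_mul_span_one_le (mul_mem_mul hx hy)
  exact (S.toSubmonoid.units.zpow_mem (S.toSubmonoid.mem_units_of_val_mem_inv_val_mem hu hu') k).1

theorem smul_add_one_mem_span_one (c : R) (e : A) : c • e + 1 ∈ span R ({1, e} : Set A) :=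
  add_mem (smul_mem _ c (subset_span (by simp))) (subset_span (by simp))

end

theorem stmt_19_general {A : Type*} [Ring A] [Algebra ℂ A] (e₁ e₂ : A)
    (h₁ : e₁ * e₁ = e₁) (h₂ : e₂ * e₂ = e₂)
    (u₁ u₂ : Aˣ) (hu₁ : (u₁ : A) = e₁ + 1) (hu₂ : (u₂ : A) = e₂ + 1)
    (hu₁' : ((u₁⁻¹ : Aˣ) : A) = (-(1/2 : ℂ)) • e₁ + 1)
    (hu₂' : ((u₂⁻¹ : Aˣ) : A) = (-(1/2 : ℂ)) • e₂ + 1) :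
    ∀ k m : ℤ, ((u₁ ^ k * u₂ ^ m : Aˣ) : A) ∈
      Submodule.span ℂ ({1, e₁, e₂, e₁ * e₂, e₂ * e₁} : Set A) := by
  intro k m
  have hpow₁ : ((u₁ ^ k : Aˣ) : A) ∈ span ℂ {1, e₁} :=
    IsIdempotentElem.val_zpow_mem_span_one h₁
      (by simpa [hu₁] using smul_add_one_mem_span_one (1 : ℂ) e₁)
      (hu₁' ▸ smul_add_one_mem_span_one _ e₁) k
  have hpow₂ : ((u₂ ^ m : Aˣ) : A) ∈ span ℂ {1, e₂} :=
    IsIdempotentElem.val_zpow_mem_span_one h₂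
      (by simpa [hu₂] using smul_add_one_mem_span_one (1 : ℂ) e₂)
      (hu₂' ▸ smul_add_one_mem_span_one _ e₂) m
  have hprod := mul_mem_mul hpow₁ hpow₂
  rw [span_mul_span, ← Units.val_mul] at hprod
  refine span_mono ?_ hprod
  rintro _ ⟨a, ha, b, hb, rfl⟩
  rcases ha with rfl | rfl <;> rcases hb with rfl | rfl <;> simp

theorem stmt_19 {A : Type*} [Ring A] [Algebra ℂ A] (e₁ e₂ : A)
    (h₁ : e₁ * e₁ = e₁) (h₂ : e₂ * e₂ = e₂)
    (h₁₂₁ : e₁ * e₂ * e₁ = -(2 * e₁)) (h₂₁₂ : e₂ * e₁ * e₂ = -(2 * e₂))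
    (u₁ u₂ : Aˣ) (hu₁ : (u₁ : A) = e₁ + 1) (hu₂ : (u₂ : A) = e₂ + 1)
    (hu₁' : ((u₁⁻¹ : Aˣ) : A) = (-(1/2 : ℂ)) • e₁ + 1)
    (hu₂' : ((u₂⁻¹ : Aˣ) : A) = (-(1/2 : ℂ)) • e₂ + 1) :
    ∀ k m : ℤ, ((u₁ ^ k * u₂ ^ m : Aˣ) : A) ∈
      Submodule.span ℂ ({1, e₁, e₂, e₁ * e₂, e₂ * e₁} : Set A) :=
  stmt_19_general e₁ e₂ h₁ h₂ u₁ u₂ hu₁ hu₂ hu₁' hu₂'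
end
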